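/- arXiv:1106.6061 — 3 statements merged into one kernel-verified Lean document; each statement's English description precedes it below -/
import Mathlib

section
/- If G is a unipolar graph, then G contains no odd antihole as an induced subgraph; that is, G contains no induced subgraph isomorphic to the complement of a chordless cycle on an odd number (at least five) of vertices. -/
/-- A clique split of a graph `G`: the vertex set is partitioned into a center clique `H`
and peripheral cliques `P 0, …, P (k-1)` with no edges between distinct peripheral cliques. -/
structure IsCliqueSplit {V : Type*} (G : SimpleGraph V) (H : Set V) {k : ℕ}
    (P : Fin k → Set V) : Prop where
  center_clique : G.IsClique H
  periph_clique : ∀ i, G.IsClique (P i)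
  center_disj : ∀ i, Disjoint H (P i)
  periph_disj : ∀ i j, i ≠ j → Disjoint (P i) (P j)
  covers : H ∪ (⋃ i, P i) = Set.univ
  no_cross : ∀ i j, i ≠ j → ∀ u ∈ P i, ∀ v ∈ P j, ¬ G.Adj u v

/-- A graph is unipolar if it admits a clique split. -/
def Unipolar {V : Type*} (G : SimpleGraph V) : Prop :=
  ∃ (H : Set V) (k : ℕ) (P : Fin k → Set V), IsCliqueSplit G H P

/-!
Pass to complements: an odd antihole becomes an induced odd cycle `C`, the center of a clique
split becomes an independent set, and vertices of distinct peripheral cliques become adjacent.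
Since `C` is not bipartite, some edge `i, i + 1` of `C` avoids the center, so `i ∈ A` and
`i + 1 ∈ B` for distinct peripheral cliques `A`, `B`. One of `i + 2`, `i + 3` is peripheral,
which forces `i + 2 ∈ A`; symmetrically `i - 1 ∈ B`. But `i - 1` and `i + 2` are not adjacent
in `C` as soon as `C` has at least five vertices.
-/

open SimpleGraph

namespace IsCliqueSplit

variable {V : Type*} {G : SimpleGraph V} {H : Set V} {k : ℕ} {P : Fin k → Set V}

theorem comap {W : Type*} {G' : SimpleGraph W} (hs : IsCliqueSplit G H P) (f : G' ↪g G) :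
    IsCliqueSplit G' (f ⁻¹' H) (fun i => f ⁻¹' P i) where
  center_clique _ hu _ hv huv := f.map_adj_iff.1 (hs.center_clique hu hv (f.injective.ne huv))
  periph_clique i _ hu _ hv huv :=
    f.map_adj_iff.1 (hs.periph_clique i hu hv (f.injective.ne huv))
  center_disj i := (hs.center_disj i).preimage f
  periph_disj i j hij := (hs.periph_disj i j hij).preimage f
  covers := by rw [← Set.preimage_iUnion, ← Set.preimage_union, hs.covers, Set.preimage_univ]
  no_cross i j hij u hu v hv huv := hs.no_cross i j hij (f u) hu (f v) hv (f.map_adj_iff.2 huv)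

theorem exists_mem_periph_of_notMem_center (hs : IsCliqueSplit G H P) {v : V} (hv : v ∉ H) :
    ∃ i, v ∈ P i := by
  have hcov : v ∈ H ∪ ⋃ i, P i := hs.covers ▸ Set.mem_univ v
  simpa [hv] using hcov

theorem isIndepSet_center (hs : IsCliqueSplit Gᶜ H P) : G.IsIndepSet H :=
  (isClique_compl G).1 hs.center_clique

theorem not_adj_of_mem_periph (hs : IsCliqueSplit Gᶜ H P) {i : Fin k} {u v : V}
    (hu : u ∈ P i) (hv : v ∈ P i) : ¬G.Adj u v := fun huv =>
  (isClique_compl G).1 (hs.periph_clique i) hu hv (G.ne_of_adj huv) huv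

theorem eq_of_mem_periph_of_not_adj (hs : IsCliqueSplit Gᶜ H P) {i j : Fin k} {u v : V}
    (hu : u ∈ P i) (hv : v ∈ P j) (huv : ¬G.Adj u v) : i = j := by
  by_contra hij
  have hne : u ≠ v := fun h => Set.disjoint_left.1 (hs.periph_disj i j hij) hu (h ▸ hv)
  exact hs.no_cross i j hij u hu v hv ((compl_adj G u v).2 ⟨hne, huv⟩)

theorem mem_periph_of_path (hs : IsCliqueSplit Gᶜ H P) {a b : Fin k} {v₀ v₁ v₂ v₃ : V}
    (h₀ : v₀ ∈ P a) (h₁ : v₁ ∈ P b) (h₀₁ : G.Adj v₀ v₁) (h₂₃ : G.Adj v₂ v₃)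
    (h₀₂ : ¬G.Adj v₀ v₂) (h₀₃ : ¬G.Adj v₀ v₃) (h₁₃ : ¬G.Adj v₁ v₃) : v₂ ∈ P a := by
  by_cases h₂ : v₂ ∈ H
  · have h₃ : v₃ ∉ H := fun h₃ => hs.isIndepSet_center h₂ h₃ (G.ne_of_adj h₂₃) h₂₃
    obtain ⟨c, hc⟩ := hs.exists_mem_periph_of_notMem_center h₃
    have hab : a = b :=
      (hs.eq_of_mem_periph_of_not_adj h₀ hc h₀₃).trans
        (hs.eq_of_mem_periph_of_not_adj h₁ hc h₁₃).symm
    exact absurd h₀₁ (hs.not_adj_of_mem_periph h₀ (hab ▸ h₁))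
  · obtain ⟨c, hc⟩ := hs.exists_mem_periph_of_notMem_center h₂
    rwa [hs.eq_of_mem_periph_of_not_adj h₀ hc h₀₂]

end IsCliqueSplit

theorem Unipolar.comap {V W : Type*} {G : SimpleGraph V} {G' : SimpleGraph W} (hG : Unipolar G)
    (f : G' ↪g G) : Unipolar G' :=
  let ⟨H, k, P, hs⟩ := hG
  ⟨f ⁻¹' H, k, fun i => f ⁻¹' P i, hs.comap f⟩

namespace SimpleGraph

theorem IsIndepSet.exists_adj_notMem_of_not_colorable_two {V : Type*} {G : SimpleGraph V}
    {H : Set V} (hH : G.IsIndepSet H) (hG : ¬G.Colorable 2) :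
    ∃ u v, G.Adj u v ∧ u ∉ H ∧ v ∉ H := by
  classical
  by_contra! hout
  refine hG (Coloring.mk (fun v => decide (v ∈ H)) fun {u v} huv => ?_).colorable
  by_cases hu : u ∈ H
  · have hv : v ∉ H := fun hv => hH hu hv (G.ne_of_adj huv) huv
    simp [hu, hv]
  · simp [hu, hout u v huv hu]

theorem exists_add_one_notMem_of_isIndepSet_cycleGraph {n : ℕ} (hodd : Odd (n + 2))
    {H : Set (Fin (n + 2))} (hH : (cycleGraph (n + 2)).IsIndepSet H) :
    ∃ i, i ∉ H ∧ i + 1 ∉ H := by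
  have hcol : ¬(cycleGraph (n + 2)).Colorable 2 := fun h => by
    have h3 := h.chromaticNumber_le
    rw [chromaticNumber_cycleGraph_of_odd (n + 2) (by omega) hodd] at h3
    norm_num at h3
  obtain ⟨u, v, huv, hu, hv⟩ := hH.exists_adj_notMem_of_not_colorable_two hcol
  rcases cycleGraph_adj.1 huv with h | h
  · exact ⟨v, hv, by rwa [← h, add_sub_cancel]⟩
  · exact ⟨u, hu, by rwa [← h, add_sub_cancel]⟩

open Fin.CommRing in
theorem not_cycleGraph_adj_of_sub_eq {n d : ℕ} (hd : 2 ≤ d) (hdn : d ≤ n) {u v : Fin (n + 2)}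
    (h : v - u = d ∨ u - v = d) : ¬(cycleGraph (n + 2)).Adj u v := by
  have hval : ((d : Fin (n + 2)) : ℕ) = d := Fin.val_cast_of_lt (by omega)
  have hneg : ((-(d : Fin (n + 2)) : Fin (n + 2)) : ℕ) = n + 2 - d := by
    rw [Fin.val_neg', hval, Nat.mod_eq_of_lt (by omega)]
  rw [cycleGraph_adj']
  rcases h with h | h <;> rw [h, ← neg_sub, h] <;> omega

end SimpleGraph

open Fin.CommRing in
theorem not_unipolar_compl_cycleGraph {n : ℕ} (hn : 5 ≤ n) (hodd : Odd n) :
    ¬Unipolar (cycleGraph n)ᶜ := by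
  obtain ⟨m, rfl⟩ : ∃ m, n = m + 5 := ⟨n - 5, by omega⟩
  rintro ⟨H, k, P, hs⟩
  have adj_of_sub (u v : Fin (m + 5)) (h : v - u = 1) : (cycleGraph (m + 5)).Adj u v := .inr h
  have not_adj_of_sub (d : ℕ) (hd : 2 ≤ d) (hdm : d ≤ 3) (u v : Fin (m + 5))
      (h : v - u = d ∨ u - v = d) : ¬(cycleGraph (m + 5)).Adj u v :=
    not_cycleGraph_adj_of_sub_eq (n := m + 3) hd (by omega) h
  obtain ⟨i, hi, hi₁⟩ := exists_add_one_notMem_of_isIndepSet_cycleGraph hodd hs.isIndepSet_center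
  obtain ⟨a, ha⟩ := hs.exists_mem_periph_of_notMem_center hi
  obtain ⟨b, hb⟩ := hs.exists_mem_periph_of_notMem_center hi₁
  have hforward : i + 2 ∈ P a := hs.mem_periph_of_path (v₃ := i + 3) ha hb
    (adj_of_sub _ _ (by ring)) (adj_of_sub _ _ (by ring))
    (not_adj_of_sub 2 le_rfl (by omega) _ _ (.inl (by push_cast; ring)))
    (not_adj_of_sub 3 (by omega) le_rfl _ _ (.inl (by push_cast; ring)))
    (not_adj_of_sub 2 le_rfl (by omega) _ _ (.inl (by push_cast; ring)))
  have hbackward : i - 1 ∈ P b := hs.mem_periph_of_path (v₃ := i - 2) hb ha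
    (adj_of_sub _ _ (by ring)).symm (adj_of_sub _ _ (by ring)).symm
    (not_adj_of_sub 2 le_rfl (by omega) _ _ (.inr (by push_cast; ring)))
    (not_adj_of_sub 3 (by omega) le_rfl _ _ (.inr (by push_cast; ring)))
    (not_adj_of_sub 2 le_rfl (by omega) _ _ (.inr (by push_cast; ring)))
  have hab : b = a := hs.eq_of_mem_periph_of_not_adj hbackward hforward
    (not_adj_of_sub 3 (by omega) le_rfl _ _ (.inl (by push_cast; ring)))
  exact hs.not_adj_of_mem_periph ha (hab ▸ hb) (adj_of_sub _ _ (by ring))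

/-- If `G` is unipolar, then `G` contains no odd antihole (induced subgraph isomorphic
to the complement of a chordless cycle on an odd number, at least five, of vertices). -/
theorem unipolar_no_odd_antihole {V : Type*} (G : SimpleGraph V) (hG : Unipolar G)
    (n : ℕ) (hn : 5 ≤ n) (hodd : Odd n) :
    IsEmpty ((SimpleGraph.cycleGraph n)ᶜ ↪g G) :=
  ⟨fun f => not_unipolar_compl_cycleGraph hn hodd (hG.comap f)⟩
end

section
/- Let G = (V,E) be an arbitrary graph and let G' = (V, E ∪ F) be an arbitrary minimal triangulation of G. Then G is unipolar if and only if G' has a feasible clique split whose center H' is a maximal clique of G'. -/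
/-- A graph is chordal if it contains no induced cycle on four or more vertices. -/
def Chordal {V : Type*} (G : SimpleGraph V) : Prop :=
  ∀ n : ℕ, 4 ≤ n → IsEmpty (SimpleGraph.cycleGraph n ↪g G)

/-- `Gp` is a minimal triangulation of `G`: it is a chordal supergraph of `G` on the same
vertex set, and no chordal graph strictly between `G` and `Gp` exists (the set of fill
edges is inclusion-minimal). -/
def IsMinimalTriangulation {V : Type*} (G Gp : SimpleGraph V) : Prop :=
  G ≤ Gp ∧ Chordal Gp ∧ ∀ Gpp : SimpleGraph V, G ≤ Gpp → Gpp ≤ Gp → Chordal Gpp → Gpp = Gp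

/-- `S` is a transferable set for the clique split of `Gp` with center `Hp` and peripheral
cliques `P`, with respect to the original graph `G`: `S ⊆ Hp`, for some `i` the set
`S ∪ P i` is a clique in `G`, and vertices of `S` have no `G`-neighbors in any `P j`, `j ≠ i`. -/
def IsTransferable {V : Type*} (G : SimpleGraph V) (Hp : Set V) {k : ℕ}
    (P : Fin k → Set V) (S : Set V) : Prop :=
  S ⊆ Hp ∧ ∃ i : Fin k, G.IsClique (S ∪ P i) ∧
    ∀ j : Fin k, j ≠ i → ∀ u ∈ S, ∀ v ∈ P j, ¬ G.Adj u v

/-- A clique split of `Gp` with center `Hp` and peripheral cliques `P` is feasible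
(with respect to the original graph `G`, the fill edges being the edges of `Gp` not in `G`):
(i) every fill edge either has one endpoint in `Hp` and the other in some `P j`, or both
endpoints in `Hp`; (ii) if some fill edge has both endpoints in `Hp`, then there is a
transferable set `S ⊆ Hp` such that every such fill edge has one endpoint in `Hp − S` and
the other in `S`. -/
def IsFeasible {V : Type*} (G Gp : SimpleGraph V) (Hp : Set V) {k : ℕ}
    (P : Fin k → Set V) : Prop :=
  (∀ u v : V, Gp.Adj u v → ¬ G.Adj u v →
      (u ∈ Hp ∧ v ∈ Hp) ∨ (u ∈ Hp ∧ ∃ j : Fin k, v ∈ P j) ∨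
        (v ∈ Hp ∧ ∃ j : Fin k, u ∈ P j)) ∧
  ((∃ u v : V, Gp.Adj u v ∧ ¬ G.Adj u v ∧ u ∈ Hp ∧ v ∈ Hp) →
      ∃ S : Set V, IsTransferable G Hp P S ∧
        ∀ u v : V, Gp.Adj u v → ¬ G.Adj u v → u ∈ Hp → v ∈ Hp →
          ((u ∈ S ∧ v ∈ Hp \ S) ∨ (v ∈ S ∧ u ∈ Hp \ S)))

/-- `Hp` is a maximal clique of `Gp`. -/
def IsMaxClique {V : Type*} (Gp : SimpleGraph V) (Hp : Set V) : Prop :=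
  Gp.IsClique Hp ∧ ∀ T : Set V, Gp.IsClique T → Hp ⊆ T → T = Hp

/-!
Given a clique split `(H, P)` of `G`, delete from `G'` every edge that joins two different
peripheral cliques. The result is still chordal: a deleted chord of an induced cycle joins two
different peripheral cliques, so each of the two arcs of the cycle between its ends meets `H`, and
two vertices of `H` on opposite arcs are adjacent, giving a chord of the cycle. By minimality no
such edge exists, so every fill edge joins `H` to a peripheral clique; any maximal clique
`H' ⊇ H` of `G'` then gives a feasible split with transferable set `H' − H`. Conversely, moving
the transferable set `S` from the center `H'` into its peripheral clique turns a feasible split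
of `G'` into a clique split of `G`.
-/

namespace SimpleGraph

open Fin.NatCast Fin.CommRing

lemma cycleGraph_adj_add_natCast_succ {n : ℕ} (a : Fin (n + 2)) (s : ℕ) :
    (cycleGraph (n + 2)).Adj (a + s) (a + (s + 1 : ℕ)) := by
  rw [cycleGraph_adj]
  right
  push_cast
  ring

lemma cycleGraph_add_natCast_ne_and_not_adj {n s e : ℕ} [NeZero n] (a : Fin n)
    (hse : s + 2 ≤ e) (hen : e + 2 ≤ n + s) :
    a + s ≠ a + e ∧ ¬(cycleGraph n).Adj (a + s) (a + e) := by
  have hfwd : (a + e) - (a + s) = ((e - s : ℕ) : Fin n) := by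
    push_cast [Nat.cast_sub (by omega : s ≤ e)]
    ring
  have hbwd : (a + s) - (a + e) = ((n - (e - s) : ℕ) : Fin n) := by
    push_cast [Nat.cast_sub (by omega : e - s ≤ n), Nat.cast_sub (by omega : s ≤ e),
      Fin.natCast_self]
    ring
  rw [cycleGraph_adj', hfwd, hbwd, Fin.val_cast_of_lt (by omega : e - s < n),
    Fin.val_cast_of_lt (by omega : n - (e - s) < n)]
  refine ⟨fun h => ?_, by omega⟩
  have := congrArg Fin.val hfwd
  rw [h, sub_self, Fin.val_zero, Fin.val_cast_of_lt (by omega : e - s < n)] at this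
  omega

end SimpleGraph

lemma mem_update_union_of_mem {ι α : Type*} [DecidableEq ι] {P : ι → Set α} {S : Set α}
    {i j : ι} {x : α} (hx : x ∈ P j) : x ∈ Function.update P i (S ∪ P i) j := by
  rcases eq_or_ne j i with rfl | hji
  · simp [hx]
  · simpa [hji] using hx

section CliqueSplit

variable {V : Type*} {G Gp : SimpleGraph V} {H : Set V} {k : ℕ} {P : Fin k → Set V}

def splitSubgraph (Gp : SimpleGraph V) (H : Set V) (P : Fin k → Set V) : SimpleGraph V where
  Adj x y := Gp.Adj x y ∧ (x ∈ H ∨ y ∈ H ∨ ∃ l, x ∈ P l ∧ y ∈ P l)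
  symm := ⟨fun _ _ ⟨hxy, h⟩ => ⟨hxy.symm, by aesop⟩⟩
  loopless := ⟨fun x h => Gp.loopless.irrefl x h.1⟩

lemma splitSubgraph_le : splitSubgraph Gp H P ≤ Gp := fun _ _ h => h.1

lemma exists_isMaxClique_superset (hH : Gp.IsClique H) : ∃ Hp, H ⊆ Hp ∧ IsMaxClique Gp Hp := by
  obtain ⟨Hp, hHHp, hmax⟩ := zorn_subset_nonempty {T | Gp.IsClique T}
    (fun c hc hchain _ => ⟨⋃₀ c, (SimpleGraph.isClique_sUnion hchain.directedOn).mpr hc,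
      fun _ => Set.subset_sUnion_of_mem⟩) H hH
  exact ⟨Hp, hHHp, hmax.prop, fun T hT hHpT => (hmax.eq_of_subset hT hHpT).symm⟩

namespace IsCliqueSplit

lemma exists_mem_periph (split : IsCliqueSplit G H P) {x : V} (hx : x ∉ H) : ∃ i, x ∈ P i := by
  have : x ∈ H ∪ ⋃ i, P i := split.covers ▸ Set.mem_univ x
  simpa [hx] using this

lemma periph_eq_of_mem (split : IsCliqueSplit G H P) {x : V} {i j : Fin k} (hi : x ∈ P i)
    (hj : x ∈ P j) : i = j := by
  by_contra hij
  exact Set.disjoint_left.mp (split.periph_disj i j hij) hi hj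

lemma notMem_center_of_mem_periph (split : IsCliqueSplit G H P) {x : V} {i : Fin k}
    (hx : x ∈ P i) : x ∉ H :=
  fun hH => Set.disjoint_left.mp (split.center_disj i) hH hx

lemma le_splitSubgraph (split : IsCliqueSplit G H P) (hle : G ≤ Gp) :
    G ≤ splitSubgraph Gp H P := by
  intro x y hxy
  refine ⟨hle hxy, or_iff_not_imp_left.mpr fun hx => or_iff_not_imp_left.mpr fun hy => ?_⟩
  obtain ⟨i, hxi⟩ := split.exists_mem_periph hx
  obtain ⟨j, hyj⟩ := split.exists_mem_periph hy
  obtain rfl : i = j := by_contra fun hij => split.no_cross i j hij x hxi y hyj hxy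
  exact ⟨i, hxi, hyj⟩

lemma mem_periph_of_splitSubgraph_adj (split : IsCliqueSplit G H P) {x y : V} {i : Fin k}
    (hxy : (splitSubgraph Gp H P).Adj x y) (hx : x ∈ P i) (hy : y ∉ H) : y ∈ P i := by
  rcases hxy.2 with hxH | hyH | ⟨l, hxl, hyl⟩
  · exact absurd hxH (split.notMem_center_of_mem_periph hx)
  · exact absurd hyH hy
  · rwa [split.periph_eq_of_mem hx hxl]

lemma exists_mem_center_of_path (split : IsCliqueSplit G H P) {g : ℕ → V} {t : ℕ}
    (hg : ∀ s < t, (splitSubgraph Gp H P).Adj (g s) (g (s + 1))) {i j : Fin k} (hij : i ≠ j)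
    (h0 : g 0 ∈ P i) (ht : g t ∈ P j) : ∃ s, 0 < s ∧ s < t ∧ g s ∈ H := by
  by_contra! hno
  have hpath : ∀ s ≤ t, g s ∈ P i := by
    intro s
    induction s with
    | zero => exact fun _ => h0
    | succ s ih =>
      intro hs
      have hnotH : g (s + 1) ∉ H := by
        rcases hs.lt_or_eq with hlt | rfl
        · exact hno _ s.succ_pos hlt
        · exact split.notMem_center_of_mem_periph ht
      exact split.mem_periph_of_splitSubgraph_adj (hg s hs) (ih (by omega)) hnotH
  exact hij (split.periph_eq_of_mem (hpath t le_rfl) ht)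

open Fin.NatCast Fin.CommRing SimpleGraph in
lemma chordal_splitSubgraph (split : IsCliqueSplit G H P) (hle : G ≤ Gp) (hch : Chordal Gp) :
    Chordal (splitSubgraph Gp H P) := by
  intro n hn
  obtain ⟨m, rfl⟩ : ∃ m, n = m + 4 := ⟨n - 4, by omega⟩
  refine ⟨fun f => ?_⟩
  obtain ⟨a, b, hab, hnab⟩ :
      ∃ a b, Gp.Adj (f a) (f b) ∧ ¬(splitSubgraph Gp H P).Adj (f a) (f b) := by
    by_contra! h
    exact (hch _ hn).false ⟨f.toEmbedding, fun {a b} => ⟨fun hab => f.map_rel_iff.mp (h a b hab),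
      fun hab => splitSubgraph_le (f.map_rel_iff.mpr hab)⟩⟩
  simp only [splitSubgraph, not_and, not_or, not_exists] at hnab
  obtain ⟨haH, hbH, hsep⟩ := hnab hab
  obtain ⟨i, hai⟩ := split.exists_mem_periph haH
  obtain ⟨j, hbj⟩ := split.exists_mem_periph hbH
  have hij : i ≠ j := by rintro rfl; exact hsep i hai hbj
  have arc : ∀ c (t : ℕ) {i j}, i ≠ j → f c ∈ P i → f (c + t) ∈ P j →
      ∃ s, 0 < s ∧ s < t ∧ f (c + s) ∈ H := fun c t _ _ hij hc hct =>
    split.exists_mem_center_of_path (g := fun s => f (c + s))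
      (fun s _ => f.map_rel_iff.mpr (cycleGraph_adj_add_natCast_succ c s)) hij
      (by simpa using hc) hct
  set t := (b - a).val
  have hb : b = a + t := by simp [t]
  obtain ⟨s₁, hs₁, hs₁t, hs₁H⟩ := arc a t hij hai (hb ▸ hbj)
  have htn : t < m + 4 := (b - a).isLt
  have hba : b + (m + 4 - t : ℕ) = a := by
    rw [Nat.cast_sub htn.le, Fin.natCast_self, hb]
    ring
  obtain ⟨s₂, hs₂, hs₂t, hs₂H⟩ := arc b (m + 4 - t) hij.symm hbj (hba ▸ hai)
  -- `a + s₁` and `b + s₂` lie on opposite arcs between `a` and `b`, yet their images are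
  -- adjacent in `G`, being in `H`
  have hs₂a : b + s₂ = a + (t + s₂ : ℕ) := by rw [hb]; push_cast; ring
  rw [hs₂a] at hs₂H
  obtain ⟨hne, hnadj⟩ := cycleGraph_add_natCast_ne_and_not_adj (n := m + 4) a
    (s := s₁) (e := t + s₂) (by omega) (by omega)
  exact hnadj (f.map_rel_iff.mp
    (split.le_splitSubgraph hle (split.center_clique hs₁H hs₂H (f.injective.ne hne))))

lemma splitSubgraph_eq (split : IsCliqueSplit G H P) (hmt : IsMinimalTriangulation G Gp) :
    splitSubgraph Gp H P = Gp :=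
  hmt.2.2 _ (split.le_splitSubgraph hmt.1) splitSubgraph_le
    (split.chordal_splitSubgraph hmt.1 hmt.2.1)


lemma mem_center_or_mem_periph_of_adj (split : IsCliqueSplit G H P)
    (hmt : IsMinimalTriangulation G Gp) {x y : V} (hxy : Gp.Adj x y) :
    x ∈ H ∨ y ∈ H ∨ ∃ l, x ∈ P l ∧ y ∈ P l := by
  rw [← split.splitSubgraph_eq hmt] at hxy
  exact hxy.2

lemma not_adj_of_mem_periph_s6 (split : IsCliqueSplit G H P)
    (hmt : IsMinimalTriangulation G Gp) : ∀ i j, i ≠ j → ∀ u ∈ P i, ∀ v ∈ P j, ¬Gp.Adj u v := by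
  intro i j hij u hu v hv huv
  rcases split.mem_center_or_mem_periph_of_adj hmt huv with huH | hvH | ⟨l, hul, hvl⟩
  · exact split.notMem_center_of_mem_periph hu huH
  · exact split.notMem_center_of_mem_periph hv hvH
  · exact hij ((split.periph_eq_of_mem hu hul).trans (split.periph_eq_of_mem hvl hv))

lemma xor_mem_center_of_fill (split : IsCliqueSplit G H P)
    (hmt : IsMinimalTriangulation G Gp) {x y : V} (hxy : Gp.Adj x y) (hnxy : ¬G.Adj x y) :
    Xor (x ∈ H) (y ∈ H) := by
  rcases split.mem_center_or_mem_periph_of_adj hmt hxy with hx | hy | ⟨l, hxl, hyl⟩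
  · exact .inl ⟨hx, fun hy => hnxy (split.center_clique hx hy hxy.ne)⟩
  · exact .inr ⟨hy, fun hx => hnxy (split.center_clique hx hy hxy.ne)⟩
  · exact absurd (split.periph_clique l hxl hyl hxy.ne) hnxy

lemma sdiff_subset_periph (split : IsCliqueSplit G H P)
    (hmt : IsMinimalTriangulation G Gp) {Hp : Set V} (hHp : Gp.IsClique Hp) {w : V}
    (hw : w ∈ Hp \ H) {l : Fin k} (hwl : w ∈ P l) : Hp \ H ⊆ P l := by
  rintro x ⟨hxHp, hxH⟩
  obtain ⟨l', hxl'⟩ := split.exists_mem_periph hxH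
  suffices l' = l from this ▸ hxl'
  by_cases hxw : x = w
  · exact split.periph_eq_of_mem hxl' (hxw ▸ hwl)
  · by_contra hne
    exact split.not_adj_of_mem_periph_s6 hmt l' l hne x hxl' w hwl (hHp hxHp hw.1 hxw)

lemma enlarge_center (split : IsCliqueSplit G H P) (hle : G ≤ Gp)
    (hcross : ∀ i j, i ≠ j → ∀ u ∈ P i, ∀ v ∈ P j, ¬Gp.Adj u v) {Hp : Set V}
    (hHp : Gp.IsClique Hp) (hHHp : H ⊆ Hp) : IsCliqueSplit Gp Hp (fun l => P l \ Hp) where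
  center_clique := hHp
  periph_clique l := ((split.periph_clique l).mono hle).subset Set.sdiff_subset
  center_disj _ := disjoint_sdiff_self_right
  periph_disj i j hij := (split.periph_disj i j hij).mono Set.sdiff_subset Set.sdiff_subset
  covers := Set.eq_univ_of_forall fun _ => or_iff_not_imp_left.mpr fun hv =>
    have ⟨l, hl⟩ := split.exists_mem_periph fun h => hv (hHHp h)
    Set.mem_iUnion.mpr ⟨l, hl, hv⟩
  no_cross i j hij u hu v hv := hcross i j hij u hu.1 v hv.1

lemma isFeasible_enlarge_center (split : IsCliqueSplit G H P)
    (hmt : IsMinimalTriangulation G Gp) {Hp : Set V} (hHp : Gp.IsClique Hp) (hHHp : H ⊆ Hp) :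
    IsFeasible G Gp Hp (fun l => P l \ Hp) := by
  have hmem : ∀ x, x ∉ H → x ∈ Hp ∨ ∃ l, x ∈ P l \ Hp := fun x hx =>
    or_iff_not_imp_left.mpr fun hxHp => (split.exists_mem_periph hx).imp fun _ hl => ⟨hl, hxHp⟩
  refine ⟨fun u v huv hnuv => ?_, fun ⟨u, v, huv, hnuv, hu, hv⟩ => ?_⟩
  · rcases split.xor_mem_center_of_fill hmt huv hnuv with ⟨huH, hvH⟩ | ⟨hvH, huH⟩
    · rcases hmem v hvH with hv | hv
      exacts [.inl ⟨hHHp huH, hv⟩, .inr (.inl ⟨hHHp huH, hv⟩)]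
    · rcases hmem u huH with hu | hu
      exacts [.inl ⟨hu, hHHp hvH⟩, .inr (.inr ⟨hHHp hvH, hu⟩)]
  · obtain ⟨w, hw⟩ : ∃ w, w ∈ Hp \ H := by
      rcases split.xor_mem_center_of_fill hmt huv hnuv with ⟨-, hvH⟩ | ⟨-, huH⟩
      exacts [⟨v, hv, hvH⟩, ⟨u, hu, huH⟩]
    obtain ⟨l, hwl⟩ := split.exists_mem_periph hw.2
    have hsub := split.sdiff_subset_periph hmt hHp hw hwl
    refine ⟨Hp \ H, ⟨Set.sdiff_subset, l, (split.periph_clique l).subset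
      (Set.union_subset hsub Set.sdiff_subset), fun j hj x hx y hy =>
        split.no_cross l j hj.symm x (hsub hx) y hy.1⟩, fun x y hxy hnxy hx hy => ?_⟩
    rcases split.xor_mem_center_of_fill hmt hxy hnxy with ⟨hxH, hyH⟩ | ⟨hyH, hxH⟩
    exacts [.inr ⟨⟨hy, hyH⟩, hx, fun h => h.2 hxH⟩, .inl ⟨⟨hx, hxH⟩, hy, fun h => h.2 hyH⟩]


lemma of_le (split : IsCliqueSplit Gp H P) (hle : G ≤ Gp) (hH : G.IsClique H)
    (hP : ∀ j, G.IsClique (P j)) : IsCliqueSplit G H P :=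
  { split with
    center_clique := hH
    periph_clique := hP
    no_cross := fun i j hij u hu v hv huv => split.no_cross i j hij u hu v hv (hle huv) }

lemma isClique_periph_of_isFeasible (split : IsCliqueSplit Gp H P)
    (feas : IsFeasible G Gp H P) (j : Fin k) : G.IsClique (P j) := by
  intro x hx y hy hxy
  by_contra hnxy
  rcases feas.1 x y (split.periph_clique j hx hy hxy) hnxy with ⟨hxH, -⟩ | ⟨hxH, -⟩ | ⟨hyH, -⟩
  exacts [split.notMem_center_of_mem_periph hx hxH, split.notMem_center_of_mem_periph hx hxH,
    split.notMem_center_of_mem_periph hy hyH]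

lemma transfer (split : IsCliqueSplit Gp H P) (hle : G ≤ Gp) {S : Set V} (hSH : S ⊆ H)
    {i : Fin k} (hSi : G.IsClique (S ∪ P i))
    (hSj : ∀ j, j ≠ i → ∀ u ∈ S, ∀ v ∈ P j, ¬G.Adj u v) (hcenter : G.IsClique (H \ S))
    (hP : ∀ j, G.IsClique (P j)) : IsCliqueSplit G (H \ S) (Function.update P i (S ∪ P i)) := by
  have hdisj : ∀ j, j ≠ i → Disjoint (S ∪ P i) (P j) := fun j hj =>
    Disjoint.union_left ((split.center_disj j).mono_left hSH) (split.periph_disj i j hj.symm)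
  have hcross : ∀ j, j ≠ i → ∀ u ∈ S ∪ P i, ∀ v ∈ P j, ¬G.Adj u v := by
    rintro j hj u (hu | hu) v hv huv
    exacts [hSj j hj u hu v hv huv, split.no_cross i j hj.symm u hu v hv (hle huv)]
  refine ⟨hcenter, fun j => ?_, fun j => ?_, fun j₁ j₂ hne => ?_, ?_, fun j₁ j₂ hne => ?_⟩
  · rcases eq_or_ne j i with rfl | hj
    · simpa using hSi
    · simpa [hj] using hP j
  · rcases eq_or_ne j i with rfl | hj
    · simpa using Disjoint.union_right disjoint_sdiff_self_left
        ((split.center_disj j).mono_left Set.sdiff_subset)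
    · simpa [hj] using (split.center_disj j).mono_left Set.sdiff_subset
  · rcases eq_or_ne j₁ i with rfl | h₁
    · simpa [hne.symm] using hdisj j₂ hne.symm
    rcases eq_or_ne j₂ i with rfl | h₂
    · simpa [h₁] using (hdisj j₁ h₁).symm
    · simpa [h₁, h₂] using split.periph_disj j₁ j₂ hne
  · refine Set.eq_univ_of_forall fun x => ?_
    by_cases hxS : x ∈ S
    · exact .inr (Set.mem_iUnion.mpr ⟨i, by simp [hxS]⟩)
    rcases split.covers ▸ Set.mem_univ x with hxH | hxP
    · exact .inl ⟨hxH, hxS⟩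
    · obtain ⟨j, hxj⟩ := Set.mem_iUnion.mp hxP
      exact .inr (Set.mem_iUnion.mpr ⟨j, mem_update_union_of_mem hxj⟩)
  · rcases eq_or_ne j₁ i with rfl | h₁
    · simpa [hne.symm] using hcross j₂ hne.symm
    rcases eq_or_ne j₂ i with rfl | h₂
    · simpa [h₁] using fun u hu v hv huv => hcross j₁ h₁ v hv u hu huv.symm
    · simpa [h₁, h₂] using fun u hu v hv huv => split.no_cross j₁ j₂ hne u hu v hv (hle huv)

end IsCliqueSplit

end CliqueSplit

/-- Let `Gp` be an arbitrary minimal triangulation of `G`. Then `G` is unipolar if and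
only if `Gp` has a feasible clique split whose center `Hp` is a maximal clique of `Gp`. -/
theorem unipolar_iff_feasible_clique_split {V : Type*} (G Gp : SimpleGraph V)
    (hmt : IsMinimalTriangulation G Gp) :
    Unipolar G ↔ ∃ (Hp : Set V) (k : ℕ) (P : Fin k → Set V),
      IsCliqueSplit Gp Hp P ∧ IsFeasible G Gp Hp P ∧ IsMaxClique Gp Hp := by
  constructor
  · rintro ⟨H, k, P, split⟩
    obtain ⟨Hp, hHHp, hmax⟩ := exists_isMaxClique_superset (split.center_clique.mono hmt.1)
    exact ⟨Hp, k, fun l => P l \ Hp,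
      split.enlarge_center hmt.1 (split.not_adj_of_mem_periph_s6 hmt) hmax.1 hHHp,
      split.isFeasible_enlarge_center hmt hmax.1 hHHp, hmax⟩
  · rintro ⟨Hp, k, P, split, feas, -⟩
    have hP := split.isClique_periph_of_isFeasible feas
    by_cases hfill : ∃ u v, Gp.Adj u v ∧ ¬G.Adj u v ∧ u ∈ Hp ∧ v ∈ Hp
    · obtain ⟨S, ⟨hSHp, i, hSi, hSj⟩, hS⟩ := feas.2 hfill
      have hcenter : G.IsClique (Hp \ S) := fun u hu v hv huv => by_contra fun hnuv => by
        rcases hS u v (split.center_clique hu.1 hv.1 huv) hnuv hu.1 hv.1 with h | h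
        exacts [hu.2 h.1, hv.2 h.1]
      exact ⟨_, k, _, split.transfer hmt.1 hSHp hSi hSj hcenter hP⟩
    · have hcenter : G.IsClique Hp := fun u hu v hv huv => by_contra fun hnuv =>
        hfill ⟨u, v, split.center_clique hu hv huv, hnuv, hu, hv⟩
      exact ⟨Hp, k, P, split.of_le hmt.1 hcenter hP⟩
end

section
/- Let G be the graph constructed from a One-in-Three 3SAT instance as follows: G has a clique on the clause vertices Q; for each variable x_i a pair of adjacent vertices x_i and a_i with a_i adjacent only to x_i; and each clause vertex adjacent to exactly the variable vertices of its clause. Then no perfect code of G contains any clause vertex q ∈ Q; consequently, for any perfect code D of G, each clause vertex has exactly one neighbor among the variable vertices in D, and for each pair {x_i, a_i}, a_i ∈ D if and only if x_i ∉ D. -/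
/-- A perfect code in `G` is an independent set `D` such that every vertex is either in
`D` or has exactly one neighbor in `D`. -/
def IsPerfectCode {V : Type*} (G : SimpleGraph V) (D : Set V) : Prop :=
  D.Pairwise (fun u v => ¬ G.Adj u v) ∧
  ∀ v : V, v ∈ D ∨ ∃! u : V, u ∈ D ∧ G.Adj v u


/-- The graph built from a One-in-Three 3SAT instance with clauses `Q` over variables
`Fin k`: clause vertices `Sum.inl j` form a clique, each variable has a pair of adjacent
vertices `Sum.inr (Sum.inl i)` (the variable vertex) and `Sum.inr (Sum.inr i)` (the
pendant vertex `a i`, adjacent only to the variable vertex), and each clause vertex is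
adjacent exactly to the variable vertices of its clause. -/
def satGraph (k s : ℕ) (Q : Fin s → Finset (Fin k)) :
    SimpleGraph (Fin s ⊕ (Fin k ⊕ Fin k)) :=
  SimpleGraph.fromRel fun u v =>
    match u, v with
    | Sum.inl _, Sum.inl _ => True
    | Sum.inl j, Sum.inr (Sum.inl i) => i ∈ Q j
    | Sum.inr (Sum.inl i), Sum.inr (Sum.inr i2) => i = i2
    | _, _ => False

/-!
A pendant vertex `a` with unique neighbour `x` forces exactly one of `a`, `x` into a perfect
code `D`. If a clause vertex `q ∈ D` were adjacent to a variable vertex `x`, then `x ∉ D` by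
independence, so its pendant `a ∈ D`, and `x` would have the two distinct neighbours `q`, `a`
in `D`. Hence clause vertices are dominated from outside, and their unique neighbour in `D`
must be a variable vertex.
-/

namespace IsPerfectCode

variable {V : Type*} {G : SimpleGraph V} {D : Set V}

lemma not_adj (hD : IsPerfectCode G D) {u w : V} (hu : u ∈ D) (hw : w ∈ D) :
    ¬ G.Adj u w := fun h => hD.1 hu hw h.ne h

lemma eq_of_adj_of_adj (hD : IsPerfectCode G D) {v u w : V} (hu : u ∈ D) (hw : w ∈ D)
    (hvu : G.Adj v u) (hvw : G.Adj v w) : u = w := by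
  rcases hD.2 v with hv | ⟨_, _, huniq⟩
  · exact absurd hvu (hD.not_adj hv hu)
  · exact (huniq u ⟨hu, hvu⟩).trans (huniq w ⟨hw, hvw⟩).symm

lemma mem_iff_notMem_of_pendant (hD : IsPerfectCode G D) {a x : V}
    (ha : ∀ u, G.Adj a u ↔ u = x) : a ∈ D ↔ x ∉ D := by
  refine ⟨fun haD hxD => hD.not_adj haD hxD ((ha x).2 rfl), fun hx => ?_⟩
  rcases hD.2 a with haD | ⟨u, ⟨huD, hau⟩, _⟩
  · exact haD
  · exact absurd ((ha u).1 hau ▸ huD) hx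

lemma notMem_of_adj_of_pendant (hD : IsPerfectCode G D) {q a x : V}
    (ha : ∀ u, G.Adj a u ↔ u = x) (hqx : G.Adj q x) (hqa : q ≠ a) : q ∉ D := by
  intro hq
  have hx : x ∉ D := fun hx => hD.not_adj hq hx hqx
  have haD : a ∈ D := (hD.mem_iff_notMem_of_pendant ha).2 hx
  exact hqa (hD.eq_of_adj_of_adj hq haD hqx.symm ((ha x).2 rfl).symm)

end IsPerfectCode

section satGraph

variable {k s : ℕ} {Q : Fin s → Finset (Fin k)}

lemma satGraph_adj_pendant_iff {i : Fin k} {u : Fin s ⊕ Fin k ⊕ Fin k} :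
    (satGraph k s Q).Adj (Sum.inr (Sum.inr i)) u ↔ u = Sum.inr (Sum.inl i) := by
  rcases u with j | i' | i' <;> simp [satGraph, eq_comm]

lemma satGraph_adj_clause_variable_iff {j : Fin s} {i : Fin k} :
    (satGraph k s Q).Adj (Sum.inl j) (Sum.inr (Sum.inl i)) ↔ i ∈ Q j := by
  simp [satGraph]

lemma satGraph_adj_clause_pendant {j : Fin s} {i : Fin k} :
    ¬ (satGraph k s Q).Adj (Sum.inl j) (Sum.inr (Sum.inr i)) := by
  simp [satGraph]

end satGraph

/-- In the graph `satGraph k s Q` built from a One-in-Three 3SAT instance (each clause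
a set of exactly three variables), no perfect code contains a clause vertex;
consequently, for any perfect code `D`, each clause vertex has exactly one neighbor
among the variable vertices in `D`, and for each pair `{x i, a i}`, the pendant vertex
`a i` is in `D` if and only if the variable vertex `x i` is not in `D`. -/
theorem satGraph_perfectCode_no_clause_vertex (k s : ℕ) (Q : Fin s → Finset (Fin k))
    (hQ : ∀ j, (Q j).card = 3)
    (D : Set (Fin s ⊕ Fin k ⊕ Fin k)) (hD : IsPerfectCode (satGraph k s Q) D) :
    (∀ j : Fin s, Sum.inl j ∉ D) ∧
    (∀ j : Fin s, ∃! i : Fin k, i ∈ Q j ∧ Sum.inr (Sum.inl i) ∈ D) ∧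
    (∀ i : Fin k, Sum.inr (Sum.inr i) ∈ D ↔ Sum.inr (Sum.inl i) ∉ D) := by
  have hpendant := fun i : Fin k => hD.mem_iff_notMem_of_pendant
    (a := Sum.inr (Sum.inr i)) fun _ => satGraph_adj_pendant_iff
  have hclause (j : Fin s) : Sum.inl j ∉ D := by
    obtain ⟨i, hi⟩ : (Q j).Nonempty := Finset.card_pos.mp (by rw [hQ j]; norm_num)
    exact hD.notMem_of_adj_of_pendant (fun _ => satGraph_adj_pendant_iff)
      (satGraph_adj_clause_variable_iff.2 hi) Sum.inl_ne_inr
  refine ⟨hclause, fun j => ?_, hpendant⟩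
  obtain ⟨u, ⟨huD, hju⟩, huniq⟩ := (hD.2 (Sum.inl j)).resolve_left (hclause j)
  rcases u with j' | i | i
  · exact absurd huD (hclause j')
  · refine ⟨i, ⟨satGraph_adj_clause_variable_iff.1 hju, huD⟩, fun i' ⟨hi'Q, hi'D⟩ => ?_⟩
    simpa using huniq _ ⟨hi'D, satGraph_adj_clause_variable_iff.2 hi'Q⟩
  · exact absurd hju satGraph_adj_clause_pendant
end
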